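/- arXiv:1803.04752 — 6 statements merged into one kernel-verified Lean document; each statement's English description precedes it below -/
import Mathlib

section
/- Let g : L → N be a surjective homomorphism of commutative monoids (written multiplicatively), let J be the kernel of the induced ring homomorphism ℤ[L] → ℤ[N] between monoid algebras, and let W be the kernel of the induced group homomorphism L^gp → N^gp between group completions. Then the map sending a class of Σᵢ λᵢ·lᵢ ∈ J (with λᵢ ∈ ℤ, lᵢ ∈ L) to Σᵢ λᵢ·(g(lᵢ) ⊗ [lᵢ]) is a well-defined ℤ[N]-module homomorphism ν_g : J/J² → ℤ[N] ⊗_ℤ W; in particular the image of each element of J lands in ℤ[N] ⊗_ℤ W and ν_g vanishes on J². -/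
/-!
`nuTilde` satisfies the Leibniz rule `ν(ab) = φ(a)·ν(b) + φ(b)·ν(a)` along `φ : ℤ[L] → ℤ[N]`,
which gives at once that it vanishes on `J²` and is `ℤ[N]`-linear on `J`. Composed with
`ℤ[N] ⊗ L^gp → ℤ[N] ⊗ N^gp` it becomes `φ` followed by the analogous map for `N`, so it sends
`J` into the kernel of that map, which is `ℤ[N] ⊗ W` because `ℤ[N]` is flat over `ℤ`.
-/

open scoped TensorProduct

/-- `ι : M →* G` realizes the commutative group `G` as the group completion of the
commutative monoid `M`. -/
def IsGroupCompletion {M G : Type*} [CommMonoid M] [CommGroup G] (ι : M →* G) : Prop :=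
  ∀ (H : Type*) [CommGroup H] (f : M →* H), ∃! g : G →* H, g.comp ι = f

/-- The map `ℤ[L] → ℤ[N] ⊗_ℤ L^gp` sending `Σ λᵢ·lᵢ` to `Σ λᵢ·(g(lᵢ) ⊗ [lᵢ])`. -/
noncomputable def nuTilde {L N Lgp : Type*} [CommMonoid L] [CommMonoid N] [CommGroup Lgp]
    (g : L →* N) (ιL : L →* Lgp) :
    MonoidAlgebra ℤ L →ₗ[ℤ] (MonoidAlgebra ℤ N ⊗[ℤ] Additive Lgp) :=
  (Finsupp.lsum ℤ fun l => LinearMap.toSpanSingleton ℤ _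
    (MonoidAlgebra.single (g l) (1 : ℤ) ⊗ₜ[ℤ] Additive.ofMul (ιL l)))
    ∘ₗ (MonoidAlgebra.coeffLinearEquiv ℤ).toLinearMap

open MonoidAlgebra

section nuTilde

variable {L N Lgp : Type*} [CommMonoid L] [CommMonoid N] [CommGroup Lgp]
    (g : L →* N) (ιL : L →* Lgp)

lemma nuTilde_single (l : L) (c : ℤ) :
    nuTilde g ιL (single l c) = c • (single (g l) (1 : ℤ) ⊗ₜ[ℤ] Additive.ofMul (ιL l)) := by
  simp [nuTilde, MonoidAlgebra.coeffLinearEquiv]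

lemma mapDomainRingHom_single (l : L) (c : ℤ) :
    mapDomainRingHom ℤ g (single l c) = single (g l) c :=
  mapDomain_single

lemma nuTilde_mul (a b : MonoidAlgebra ℤ L) :
    nuTilde g ιL (a * b) =
      mapDomainRingHom ℤ g a • nuTilde g ιL b + mapDomainRingHom ℤ g b • nuTilde g ιL a := by
  induction a using MonoidAlgebra.induction_linear with
  | zero => simp
  | add a a' ha ha' => simp only [add_mul, map_add, ha, ha', add_smul, smul_add]; abel
  | single l c =>
    induction b using MonoidAlgebra.induction_linear with
    | zero => simp
    | add b b' hb hb' => simp only [mul_add, map_add, hb, hb', add_smul, smul_add]; abel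
    | single l' c' =>
      simp only [single_mul_single, nuTilde_single, mapDomainRingHom_single, map_mul,
        ofMul_mul, TensorProduct.tmul_add, smul_add, TensorProduct.smul_tmul', smul_single',
        mul_one, smul_eq_mul]
      rw [add_comm, mul_comm (g l'), mul_comm c']

lemma nuTilde_mul_of_mem_ker {a b : MonoidAlgebra ℤ L}
    (hb : b ∈ RingHom.ker (mapDomainRingHom ℤ g)) :
    nuTilde g ιL (a * b) = mapDomainRingHom ℤ g a • nuTilde g ιL b := by
  rw [nuTilde_mul, RingHom.mem_ker.mp hb, zero_smul, add_zero]

lemma nuTilde_eq_zero_of_mem_ker_sq {x : MonoidAlgebra ℤ L}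
    (hx : x ∈ RingHom.ker (mapDomainRingHom ℤ g) ^ 2) : nuTilde g ιL x = 0 := by
  rw [pow_two] at hx
  refine Submodule.mul_induction_on hx (fun a ha b hb => ?_) (fun a b ha hb => ?_)
  · rw [nuTilde_mul_of_mem_ker g ιL hb, RingHom.mem_ker.mp ha, zero_smul]
  · rw [map_add, ha, hb, add_zero]

variable {Ngp : Type*} [CommGroup Ngp] {ιN : N →* Ngp} {ggp : Lgp →* Ngp}

lemma lTensor_nuTilde (hcomm : ∀ l, ggp (ιL l) = ιN (g l)) (x : MonoidAlgebra ℤ L) :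
    (MonoidHom.toAdditive ggp).toIntLinearMap.lTensor (MonoidAlgebra ℤ N) (nuTilde g ιL x) =
      nuTilde (MonoidHom.id N) ιN (mapDomainRingHom ℤ g x) := by
  induction x using MonoidAlgebra.induction_linear with
  | zero => simp
  | add x y hx hy => rw [map_add, map_add, hx, hy, map_add, map_add]
  | single l c =>
    rw [nuTilde_single, map_smul, LinearMap.lTensor_tmul, mapDomainRingHom_single, nuTilde_single]
    simp [hcomm l]

lemma nuTilde_mem_range_of_mem_ker (hcomm : ∀ l, ggp (ιL l) = ιN (g l))
    {x : MonoidAlgebra ℤ L} (hx : x ∈ RingHom.ker (mapDomainRingHom ℤ g)) :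
    nuTilde g ιL x ∈ LinearMap.range (TensorProduct.map LinearMap.id
      (Subgroup.toAddSubgroup ggp.ker).subtype.toIntLinearMap) := by
  have hexact := Module.Flat.lTensor_exact (MonoidAlgebra ℤ N)
    (LinearMap.exact_subtype_ker_map (MonoidHom.toAdditive ggp).toIntLinearMap)
  exact (hexact _).mp (by rw [lTensor_nuTilde g ιL hcomm, RingHom.mem_ker.mp hx, map_zero])

end nuTilde

theorem stmt_0_general {L N Lgp Ngp : Type*} [CommMonoid L] [CommMonoid N]
    [CommGroup Lgp] [CommGroup Ngp]
    (g : L →* N)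
    (ιL : L →* Lgp) (ιN : N →* Ngp)
    (ggp : Lgp →* Ngp) (hcomm : ∀ l : L, ggp (ιL l) = ιN (g l)) :
    (∀ x ∈ RingHom.ker (MonoidAlgebra.mapDomainRingHom ℤ g),
        nuTilde g ιL x ∈ LinearMap.range
          (TensorProduct.map (LinearMap.id : MonoidAlgebra ℤ N →ₗ[ℤ] MonoidAlgebra ℤ N)
            ((Subgroup.toAddSubgroup (MonoidHom.ker ggp)).subtype.toIntLinearMap))) ∧
    (∀ x ∈ (RingHom.ker (MonoidAlgebra.mapDomainRingHom ℤ g)) ^ 2,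
        nuTilde g ιL x = 0) ∧
    (∀ x ∈ RingHom.ker (MonoidAlgebra.mapDomainRingHom ℤ g), ∀ m : L,
        nuTilde g ιL (MonoidAlgebra.single m (1 : ℤ) * x) =
          MonoidAlgebra.single (g m) (1 : ℤ) • nuTilde g ιL x) :=
  ⟨fun _ hx => nuTilde_mem_range_of_mem_ker g ιL hcomm hx,
    fun _ hx => nuTilde_eq_zero_of_mem_ker_sq g ιL hx,
    fun _ hx m => by rw [nuTilde_mul_of_mem_ker g ιL hx, mapDomainRingHom_single]⟩

/-- For a surjective homomorphism `g : L → N` of commutative monoids with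
`J = ker(ℤ[L] → ℤ[N])` and `W = ker(L^gp → N^gp)`, the map `Σλᵢ·lᵢ ↦ Σλᵢ·(g(lᵢ) ⊗ lᵢ)`
sends `J` into `ℤ[N] ⊗_ℤ W`, vanishes on `J²`, and is `ℤ[N]`-semilinear; hence it
induces a well-defined `ℤ[N]`-module homomorphism `ν_g : J/J² → ℤ[N] ⊗_ℤ W`. -/
theorem stmt_0 {L N Lgp Ngp : Type*} [CommMonoid L] [CommMonoid N]
    [CommGroup Lgp] [CommGroup Ngp]
    (g : L →* N) (hg : Function.Surjective g)
    (ιL : L →* Lgp) (ιN : N →* Ngp)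
    (hL : IsGroupCompletion ιL) (hN : IsGroupCompletion ιN)
    (ggp : Lgp →* Ngp) (hcomm : ∀ l : L, ggp (ιL l) = ιN (g l)) :
    (∀ x ∈ RingHom.ker (MonoidAlgebra.mapDomainRingHom ℤ g),
        nuTilde g ιL x ∈ LinearMap.range
          (TensorProduct.map (LinearMap.id : MonoidAlgebra ℤ N →ₗ[ℤ] MonoidAlgebra ℤ N)
            ((Subgroup.toAddSubgroup (MonoidHom.ker ggp)).subtype.toIntLinearMap))) ∧
    (∀ x ∈ (RingHom.ker (MonoidAlgebra.mapDomainRingHom ℤ g)) ^ 2,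
        nuTilde g ιL x = 0) ∧
    (∀ x ∈ RingHom.ker (MonoidAlgebra.mapDomainRingHom ℤ g), ∀ m : L,
        nuTilde g ιL (MonoidAlgebra.single m (1 : ℤ) * x) =
          MonoidAlgebra.single (g m) (1 : ℤ) • nuTilde g ιL x) :=
  stmt_0_general g ιL ιN ggp hcomm
end

section
/- Let h : M → N be a homomorphism of commutative monoids and let g : N ⊕_M N → N be the codiagonal (fold) homomorphism from the pushout of N ← M → N. Then the kernel of the induced map (N ⊕_M N)^gp → N^gp on group completions is naturally isomorphic, as an abelian group, to the cokernel of M^gp → N^gp. -/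
/-- `(Q, i₁, i₂)` is the pushout of the commutative monoid diagram `N ←f– M –h→ P`. -/
def IsMonoidPushout {M N P Q : Type*} [CommMonoid M] [CommMonoid N] [CommMonoid P]
    [CommMonoid Q] (f : M →* N) (h : M →* P) (i₁ : N →* Q) (i₂ : P →* Q) : Prop :=
  i₁.comp f = i₂.comp h ∧
    ∀ (T : Type*) [CommMonoid T] (a : N →* T) (b : P →* T),
      a.comp f = b.comp h → ∃! c : Q →* T, c.comp i₁ = a ∧ c.comp i₂ = b

/-! ### Characters -/

/-- Every nontrivial element of a commutative group is detected by a character valued in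
the rational circle. -/
lemma exists_char {G : Type*} [CommGroup G] {x : G} (hx : x ≠ 1) :
    ∃ χ : G →* Multiplicative (AddCircle (1 : ℚ)), χ x ≠ 1 := by
  obtain ⟨c, hc⟩ := CharacterModule.exists_character_apply_ne_zero_of_ne_zero
    (A := Additive G) (a := Additive.ofMul x) (by simpa using hx)
  refine ⟨{ toFun := fun g => Multiplicative.ofAdd (c (Additive.ofMul g)),
            map_one' := ?_, map_mul' := ?_ }, ?_⟩
  · simp [congrArg Multiplicative.ofAdd (map_zero c)]
  · intro a b
    exact congrArg Multiplicative.ofAdd (map_add c (Additive.ofMul a) (Additive.ofMul b))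
  · simpa using hc

/-! ### Universe upgrade for group completions -/

section Upgrade

variable {N Ngp W : Type*} [CommMonoid N] [CommGroup Ngp] [CommGroup W]

lemma closure_range_eq_top (eW : W ≃* Multiplicative (AddCircle (1 : ℚ))) (ιN : N →* Ngp)
    (hW : ∀ f : N →* W, ∃! g : Ngp →* W, g.comp ιN = f) :
    Subgroup.closure (Set.range ιN) = ⊤ := by
  by_contra hS
  set S := Subgroup.closure (Set.range ιN) with hSdef
  obtain ⟨x, hx⟩ : ∃ x : Ngp, x ∉ S := by
    by_contra hc; push_neg at hc; exact hS (top_unique fun y _ => hc y)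
  have hx1 : (QuotientGroup.mk x : Ngp ⧸ S) ≠ 1 := by
    rw [Ne, QuotientGroup.eq_one_iff]; exact hx
  obtain ⟨χ, hχ⟩ := exists_char hx1
  set χW : Ngp →* W := (eW.symm.toMonoidHom.comp χ).comp (QuotientGroup.mk' S) with hχW
  have h1 : χW.comp ιN = (1 : N →* W) := by
    ext n
    show eW.symm (χ (QuotientGroup.mk (ιN n))) = 1
    have hn : (QuotientGroup.mk (ιN n) : Ngp ⧸ S) = 1 := by
      rw [QuotientGroup.eq_one_iff]; exact Subgroup.subset_closure ⟨n, rfl⟩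
    rw [hn, map_one, map_one]
  obtain ⟨u, -, hu⟩ := hW 1
  have heq : χW = 1 := (hu χW h1).trans (hu 1 (MonoidHom.one_comp _)).symm
  apply hχ
  have hx0 : eW.symm (χ (QuotientGroup.mk x)) = 1 := DFunLike.congr_fun heq x
  have := congrArg eW hx0
  simpa using this

lemma completion_unique (eW : W ≃* Multiplicative (AddCircle (1 : ℚ))) (ιN : N →* Ngp)
    (hW : ∀ f : N →* W, ∃! g : Ngp →* W, g.comp ιN = f)
    {H : Type*} [CommGroup H] (g g' : Ngp →* H) (hgg : g.comp ιN = g'.comp ιN) : g = g' := by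
  apply MonoidHom.eq_of_eqOn_dense (closure_range_eq_top eW ιN hW)
  rintro x ⟨n, rfl⟩
  exact DFunLike.congr_fun hgg n

lemma completion_up (eW : W ≃* Multiplicative (AddCircle (1 : ℚ))) (ιN : N →* Ngp)
    (hW : ∀ f : N →* W, ∃! g : Ngp →* W, g.comp ιN = f)
    (H : Type*) [CommGroup H] (f : N →* H) : ∃! g : Ngp →* H, g.comp ιN = f := by
  have hgen := closure_range_eq_top eW ιN hW
  set K := Subgroup.closure (Set.range (ιN.prod f)) with hK
  set π₁ : K →* Ngp := (MonoidHom.fst Ngp H).comp K.subtype with hπ₁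
  have hsurj : Function.Surjective π₁ := by
    have hmap : K.map (MonoidHom.fst Ngp H) = ⊤ := by
      rw [hK, MonoidHom.map_closure]
      have himg : (MonoidHom.fst Ngp H) '' Set.range (ιN.prod f) = Set.range ιN := by
        ext y
        constructor
        · rintro ⟨-, ⟨n, rfl⟩, rfl⟩; exact ⟨n, rfl⟩
        · rintro ⟨n, rfl⟩; exact ⟨(ιN n, f n), ⟨n, rfl⟩, rfl⟩
      rw [himg, hgen]
    intro y
    have hy : y ∈ K.map (MonoidHom.fst Ngp H) := by rw [hmap]; trivial
    obtain ⟨k, hk, hky⟩ := hy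
    exact ⟨⟨k, hk⟩, hky⟩
  have hone : ∀ y : H, ((1 : Ngp), y) ∈ K → y = 1 := by
    intro y hy
    by_contra hy1
    obtain ⟨χ₀, hχ₀⟩ := exists_char hy1
    set χ : H →* W := eW.symm.toMonoidHom.comp χ₀ with hχdef
    obtain ⟨g₀, hg₀, -⟩ := hW (χ.comp f)
    set ψ : Ngp × H →* W := (χ.comp (MonoidHom.snd Ngp H)) * (g₀.comp (MonoidHom.fst Ngp H))⁻¹
      with hψ
    have hker : K ≤ ψ.ker := by
      rw [hK, Subgroup.closure_le]
      rintro - ⟨n, rfl⟩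
      have h1 : g₀ (ιN n) = χ (f n) := DFunLike.congr_fun hg₀ n
      simp [hψ, MonoidHom.mem_ker, MonoidHom.mul_apply, MonoidHom.inv_apply, h1]
    have h2 : χ y * (g₀ (1 : Ngp))⁻¹ = 1 := hker hy
    rw [map_one, inv_one, mul_one] at h2
    apply hχ₀
    have := congrArg eW h2
    simpa [hχdef] using this
  have hinj : Function.Injective π₁ := by
    rintro ⟨⟨x, y⟩, hxy⟩ ⟨⟨x', y'⟩, hxy'⟩ hxx
    have hxx' : x = x' := hxx
    subst hxx'
    have hmem : ((1 : Ngp), y⁻¹ * y') ∈ K := by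
      have := mul_mem (inv_mem hxy) hxy'
      simpa using this
    have hyy : y⁻¹ * y' = 1 := hone _ hmem
    have : y = y' := by rwa [inv_mul_eq_one] at hyy
    subst this
    rfl
  let e : K ≃* Ngp := MulEquiv.ofBijective π₁ ⟨hinj, hsurj⟩
  have hgdef : (((MonoidHom.snd Ngp H).comp K.subtype).comp e.symm.toMonoidHom).comp ιN = f := by
    ext n
    have hkmem : (ιN n, f n) ∈ K := Subgroup.subset_closure ⟨n, rfl⟩
    have hsymm : e.symm (ιN n) = ⟨(ιN n, f n), hkmem⟩ := by
      apply e.injective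
      rw [MulEquiv.apply_symm_apply]
      rfl
    show ((MonoidHom.snd Ngp H) ((K.subtype) (e.symm (ιN n)))) = f n
    rw [hsymm]
    rfl
  exact ⟨_, hgdef, fun g' hg' =>
    completion_unique eW ιN hW g' _ (hg'.trans hgdef.symm)⟩

end Upgrade

/-! ### Universe upgrade for group pushouts -/

section PushUpgrade

variable {A B P W : Type*} [CommGroup A] [CommGroup B] [CommGroup P] [CommGroup W]

lemma pushout_gen (eW : W ≃* Multiplicative (AddCircle (1 : ℚ))) (f : A →* B) (k₁ k₂ : B →* P)
    (hW : ∀ a b : B →* W, a.comp f = b.comp f →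
      ∃! c : P →* W, c.comp k₁ = a ∧ c.comp k₂ = b) :
    Subgroup.closure (Set.range k₁ ∪ Set.range k₂) = ⊤ := by
  by_contra hS
  set S := Subgroup.closure (Set.range k₁ ∪ Set.range k₂) with hSdef
  obtain ⟨x, hx⟩ : ∃ x : P, x ∉ S := by
    by_contra hc; push_neg at hc; exact hS (top_unique fun y _ => hc y)
  have hx1 : (QuotientGroup.mk x : P ⧸ S) ≠ 1 := by
    rw [Ne, QuotientGroup.eq_one_iff]; exact hx
  obtain ⟨χ, hχ⟩ := exists_char hx1
  set χW : P →* W := (eW.symm.toMonoidHom.comp χ).comp (QuotientGroup.mk' S) with hχW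
  have h1 : χW.comp k₁ = (1 : B →* W) := by
    ext n
    show eW.symm (χ (QuotientGroup.mk (k₁ n))) = 1
    have hn : (QuotientGroup.mk (k₁ n) : P ⧸ S) = 1 := by
      rw [QuotientGroup.eq_one_iff]
      exact Subgroup.subset_closure (Or.inl ⟨n, rfl⟩)
    rw [hn, map_one, map_one]
  have h2 : χW.comp k₂ = (1 : B →* W) := by
    ext n
    show eW.symm (χ (QuotientGroup.mk (k₂ n))) = 1
    have hn : (QuotientGroup.mk (k₂ n) : P ⧸ S) = 1 := by
      rw [QuotientGroup.eq_one_iff]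
      exact Subgroup.subset_closure (Or.inr ⟨n, rfl⟩)
    rw [hn, map_one, map_one]
  obtain ⟨u, -, hu⟩ := hW 1 1 rfl
  have heq : χW = 1 :=
    (hu χW ⟨h1, h2⟩).trans (hu 1 ⟨MonoidHom.one_comp _, MonoidHom.one_comp _⟩).symm
  apply hχ
  have hx0 : eW.symm (χ (QuotientGroup.mk x)) = 1 := DFunLike.congr_fun heq x
  have := congrArg eW hx0
  simpa using this

lemma pushout_unique (k₁ k₂ : B →* P)
    (hgen : Subgroup.closure (Set.range k₁ ∪ Set.range k₂) = ⊤)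
    {T : Type*} [CommGroup T] (c c' : P →* T)
    (h1 : c.comp k₁ = c'.comp k₁) (h2 : c.comp k₂ = c'.comp k₂) : c = c' := by
  apply MonoidHom.eq_of_eqOn_dense hgen
  rintro x (⟨n, rfl⟩ | ⟨n, rfl⟩)
  · exact DFunLike.congr_fun h1 n
  · exact DFunLike.congr_fun h2 n

lemma pushout_up (eW : W ≃* Multiplicative (AddCircle (1 : ℚ))) (f : A →* B) (k₁ k₂ : B →* P)
    (hW : ∀ a b : B →* W, a.comp f = b.comp f →
      ∃! c : P →* W, c.comp k₁ = a ∧ c.comp k₂ = b)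
    (T : Type*) [CommGroup T] (a b : B →* T) (hab : a.comp f = b.comp f) :
    ∃! c : P →* T, c.comp k₁ = a ∧ c.comp k₂ = b := by
  have hgen := pushout_gen eW f k₁ k₂ hW
  set K := Subgroup.closure (Set.range (k₁.prod a) ∪ Set.range (k₂.prod b)) with hK
  set π₁ : K →* P := (MonoidHom.fst P T).comp K.subtype with hπ₁
  have hsurj : Function.Surjective π₁ := by
    have hmap : K.map (MonoidHom.fst P T) = ⊤ := by
      rw [hK, MonoidHom.map_closure]
      have himg : (MonoidHom.fst P T) '' (Set.range (k₁.prod a) ∪ Set.range (k₂.prod b))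
          = Set.range k₁ ∪ Set.range k₂ := by
        rw [Set.image_union]
        congr 1
        · ext y
          constructor
          · rintro ⟨-, ⟨n, rfl⟩, rfl⟩; exact ⟨n, rfl⟩
          · rintro ⟨n, rfl⟩; exact ⟨(k₁ n, a n), ⟨n, rfl⟩, rfl⟩
        · ext y
          constructor
          · rintro ⟨-, ⟨n, rfl⟩, rfl⟩; exact ⟨n, rfl⟩
          · rintro ⟨n, rfl⟩; exact ⟨(k₂ n, b n), ⟨n, rfl⟩, rfl⟩
      rw [himg, hgen]
    intro y
    have hy : y ∈ K.map (MonoidHom.fst P T) := by rw [hmap]; trivial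
    obtain ⟨k, hk, hky⟩ := hy
    exact ⟨⟨k, hk⟩, hky⟩
  have hone : ∀ y : T, ((1 : P), y) ∈ K → y = 1 := by
    intro y hy
    by_contra hy1
    obtain ⟨χ₀, hχ₀⟩ := exists_char hy1
    set χ : T →* W := eW.symm.toMonoidHom.comp χ₀ with hχdef
    have hcomp : (χ.comp a).comp f = (χ.comp b).comp f := by
      ext m
      exact congrArg χ (DFunLike.congr_fun hab m)
    obtain ⟨c₀, ⟨hc₀1, hc₀2⟩, -⟩ := hW (χ.comp a) (χ.comp b) hcomp
    set ψ : P × T →* W := (χ.comp (MonoidHom.snd P T)) * (c₀.comp (MonoidHom.fst P T))⁻¹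
      with hψ
    have hker : K ≤ ψ.ker := by
      rw [hK, Subgroup.closure_le]
      rintro - (⟨n, rfl⟩ | ⟨n, rfl⟩)
      · have h1 : c₀ (k₁ n) = χ (a n) := DFunLike.congr_fun hc₀1 n
        simp [hψ, MonoidHom.mem_ker, MonoidHom.mul_apply, MonoidHom.inv_apply, h1]
      · have h1 : c₀ (k₂ n) = χ (b n) := DFunLike.congr_fun hc₀2 n
        simp [hψ, MonoidHom.mem_ker, MonoidHom.mul_apply, MonoidHom.inv_apply, h1]
    have h2 : χ y * (c₀ (1 : P))⁻¹ = 1 := hker hy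
    rw [map_one, inv_one, mul_one] at h2
    apply hχ₀
    have := congrArg eW h2
    simpa [hχdef] using this
  have hinj : Function.Injective π₁ := by
    rintro ⟨⟨x, y⟩, hxy⟩ ⟨⟨x', y'⟩, hxy'⟩ hxx
    have hxx' : x = x' := hxx
    subst hxx'
    have hmem : ((1 : P), y⁻¹ * y') ∈ K := by
      have := mul_mem (inv_mem hxy) hxy'
      simpa using this
    have hyy : y⁻¹ * y' = 1 := hone _ hmem
    have : y = y' := by rwa [inv_mul_eq_one] at hyy
    subst this
    rfl
  let e : K ≃* P := MulEquiv.ofBijective π₁ ⟨hinj, hsurj⟩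
  set c : P →* T := ((MonoidHom.snd P T).comp K.subtype).comp e.symm.toMonoidHom with hc
  have hc1 : c.comp k₁ = a := by
    ext n
    have hkmem : (k₁ n, a n) ∈ K := Subgroup.subset_closure (Or.inl ⟨n, rfl⟩)
    have hsymm : e.symm (k₁ n) = ⟨(k₁ n, a n), hkmem⟩ := by
      apply e.injective
      rw [MulEquiv.apply_symm_apply]
      rfl
    show ((MonoidHom.snd P T) ((K.subtype) (e.symm (k₁ n)))) = a n
    rw [hsymm]
    rfl
  have hc2 : c.comp k₂ = b := by
    ext n
    have hkmem : (k₂ n, b n) ∈ K := Subgroup.subset_closure (Or.inr ⟨n, rfl⟩)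
    have hsymm : e.symm (k₂ n) = ⟨(k₂ n, b n), hkmem⟩ := by
      apply e.injective
      rw [MulEquiv.apply_symm_apply]
      rfl
    show ((MonoidHom.snd P T) ((K.subtype) (e.symm (k₂ n)))) = b n
    rw [hsymm]
    rfl
  exact ⟨c, ⟨hc1, hc2⟩, fun c' ⟨h1', h2'⟩ =>
    pushout_unique k₁ k₂ hgen c' c (h1'.trans hc1.symm) (h2'.trans hc2.symm)⟩

end PushUpgrade

/-! ### Concrete model for the pushout of `f` along itself in commutative groups -/

section ConcreteModel

variable {A B : Type*} [CommGroup A] [CommGroup B]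

/-- The antidiagonal subgroup `{(f a, (f a)⁻¹)}` of `B × B`. -/
def auxS (f : A →* B) : Subgroup (B × B) := (f.prod f⁻¹).range

/-- Concrete model for the pushout of `f : A →* B` along itself in commutative groups. -/
abbrev auxP (f : A →* B) := (B × B) ⧸ auxS f

/-- First structural map into the concrete pushout. -/
def auxp₁ (f : A →* B) : B →* auxP f :=
  (QuotientGroup.mk' (auxS f)).comp (MonoidHom.inl B B)

/-- Second structural map into the concrete pushout. -/
def auxp₂ (f : A →* B) : B →* auxP f :=
  (QuotientGroup.mk' (auxS f)).comp (MonoidHom.inr B B)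

lemma auxS_le_ker (f : A →* B) : auxS f ≤ MonoidHom.ker (mulMonoidHom (α := B)) := by
  rintro ⟨x, y⟩ ⟨m, hm⟩
  simp only [MonoidHom.prod_apply, Prod.mk.injEq, MonoidHom.inv_apply] at hm
  obtain ⟨h1, h2⟩ := hm
  simp [MonoidHom.mem_ker, mulMonoidHom, ← h1, ← h2]

/-- The fold (codiagonal) map on the concrete pushout. -/
def auxg (f : A →* B) : auxP f →* B :=
  QuotientGroup.lift (auxS f) mulMonoidHom (auxS_le_ker f)

lemma aux_comm (f : A →* B) : (auxp₁ f).comp f = (auxp₂ f).comp f := by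
  ext a
  simp only [MonoidHom.comp_apply, auxp₁, auxp₂, MonoidHom.inl_apply, MonoidHom.inr_apply,
    QuotientGroup.mk'_apply]
  rw [QuotientGroup.eq]
  exact ⟨a⁻¹, by simp⟩

lemma aux_fold₁ (f : A →* B) : (auxg f).comp (auxp₁ f) = MonoidHom.id B := by
  ext x
  simp [auxg, auxp₁, mulMonoidHom]

lemma aux_fold₂ (f : A →* B) : (auxg f).comp (auxp₂ f) = MonoidHom.id B := by
  ext x
  simp [auxg, auxp₂, mulMonoidHom]

lemma aux_up (f : A →* B) (T : Type*) [CommGroup T] (a b : B →* T)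
    (hab : a.comp f = b.comp f) :
    ∃! c : auxP f →* T, c.comp (auxp₁ f) = a ∧ c.comp (auxp₂ f) = b := by
  have hle : auxS f ≤ ((a.comp (MonoidHom.fst B B)) * (b.comp (MonoidHom.snd B B))).ker := by
    rintro ⟨x, y⟩ ⟨m, hm⟩
    simp only [MonoidHom.prod_apply, Prod.mk.injEq, MonoidHom.inv_apply] at hm
    obtain ⟨h1, h2⟩ := hm
    have hm' : a (f m) = b (f m) := DFunLike.congr_fun hab m
    simp [MonoidHom.mem_ker, ← h1, ← h2, hm']
  refine ⟨QuotientGroup.lift (auxS f) _ hle, ⟨?_, ?_⟩, ?_⟩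
  · ext x
    simp [auxp₁]
  · ext x
    simp [auxp₂]
  · rintro c' ⟨h1, h2⟩
    apply QuotientGroup.monoidHom_ext
    ext ⟨x, y⟩
    have hxy : (QuotientGroup.mk (x, y) : auxP f) = auxp₁ f x * auxp₂ f y := by
      simp only [auxp₁, auxp₂, MonoidHom.comp_apply, MonoidHom.inl_apply, MonoidHom.inr_apply,
        QuotientGroup.mk'_apply, ← QuotientGroup.mk_mul, Prod.mk_mul_mk, mul_one, one_mul]
    have e1 : c' ((auxp₁ f) x) = a x := DFunLike.congr_fun h1 x
    have e2 : c' ((auxp₂ f) y) = b y := DFunLike.congr_fun h2 y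
    simp only [MonoidHom.comp_apply, QuotientGroup.mk'_apply, hxy, map_mul, e1, e2]
    simp [auxp₁, auxp₂]

/-- The "twisted diagonal" map `x ↦ (x, x⁻¹)` into the concrete pushout. -/
def auxθ (f : A →* B) : B →* auxP f :=
  (QuotientGroup.mk' (auxS f)).comp ((MonoidHom.id B).prod (MonoidHom.id B)⁻¹)

lemma auxθ_ker (f : A →* B) : (auxθ f).ker = f.range := by
  ext x
  simp only [MonoidHom.mem_ker, auxθ, MonoidHom.comp_apply, MonoidHom.prod_apply,
    MonoidHom.id_apply, MonoidHom.inv_apply, QuotientGroup.mk'_apply,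
    QuotientGroup.eq_one_iff]
  constructor
  · rintro ⟨m, hm⟩
    exact ⟨m, congrArg Prod.fst hm⟩
  · rintro ⟨m, hm⟩
    exact ⟨m, by simp [Prod.ext_iff, hm]⟩

lemma auxθ_range (f : A →* B) : (auxθ f).range = (auxg f).ker := by
  ext q
  constructor
  · rintro ⟨x, rfl⟩
    simp [MonoidHom.mem_ker, auxθ, auxg, mulMonoidHom]
  · intro hq
    obtain ⟨⟨x, y⟩, rfl⟩ := QuotientGroup.mk_surjective q
    have hxy : x * y = 1 := by
      simpa [MonoidHom.mem_ker, auxg, mulMonoidHom] using hq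
    have hy : y = x⁻¹ := eq_inv_of_mul_eq_one_right (by rw [mul_comm]; simpa [mul_comm] using hxy)
    exact ⟨x, by simp [auxθ, hy]⟩

lemma aux_iso (f : A →* B) : Nonempty ((auxg f).ker ≃* B ⧸ f.range) :=
  ⟨((MulEquiv.subgroupCongr (auxθ_range f)).symm.trans
      (QuotientGroup.quotientKerEquivRange (auxθ f)).symm).trans
    (QuotientGroup.quotientMulEquivOfEq (auxθ_ker f))⟩

end ConcreteModel

/-- Joint epimorphy from the pushout universal property. -/
lemma epi_of_up {A B G T : Type*} [CommGroup A] [CommGroup B] [CommGroup G] [CommGroup T]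
    (f : A →* B) (j₁ j₂ : B →* G)
    (hup : ∀ a b : B →* T, a.comp f = b.comp f → ∃! c : G →* T, c.comp j₁ = a ∧ c.comp j₂ = b)
    (hc : j₁.comp f = j₂.comp f)
    (u u' : G →* T) (e1 : u.comp j₁ = u'.comp j₁) (e2 : u.comp j₂ = u'.comp j₂) : u = u' := by
  have hab : (u.comp j₁).comp f = (u.comp j₂).comp f := by
    rw [MonoidHom.comp_assoc, MonoidHom.comp_assoc, hc]
  obtain ⟨cc, -, hu⟩ := hup _ _ hab
  rw [hu u ⟨rfl, rfl⟩, hu u' ⟨e1.symm, e2.symm⟩]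

/-- Transfer of fold-kernels along two realizations of the same pushout. -/
lemma aux_transfer {B G G' : Type*} [CommGroup B] [CommGroup G] [CommGroup G']
    (j₁ j₂ : B →* G) (p₁ p₂ : B →* G') (gG : G →* B) (gG' : G' →* B)
    (hex : ∃ c : G →* G', c.comp j₁ = p₁ ∧ c.comp j₂ = p₂)
    (hex' : ∃ c' : G' →* G, c'.comp p₁ = j₁ ∧ c'.comp p₂ = j₂)
    (hepiG : ∀ u u' : G →* G, u.comp j₁ = u'.comp j₁ → u.comp j₂ = u'.comp j₂ → u = u')
    (hepiB : ∀ u u' : G →* B, u.comp j₁ = u'.comp j₁ → u.comp j₂ = u'.comp j₂ → u = u')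
    (hepiG' : ∀ u u' : G' →* G', u.comp p₁ = u'.comp p₁ → u.comp p₂ = u'.comp p₂ → u = u')
    (hf1 : gG.comp j₁ = MonoidHom.id B) (hf2 : gG.comp j₂ = MonoidHom.id B)
    (hf1' : gG'.comp p₁ = MonoidHom.id B) (hf2' : gG'.comp p₂ = MonoidHom.id B) :
    Nonempty (gG.ker ≃* gG'.ker) := by
  obtain ⟨c, hc1, hc2⟩ := hex
  obtain ⟨c', hc1', hc2'⟩ := hex'
  have hcc : c'.comp c = MonoidHom.id G := by
    apply hepiG
    · rw [MonoidHom.comp_assoc, hc1, hc1', MonoidHom.id_comp]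
    · rw [MonoidHom.comp_assoc, hc2, hc2', MonoidHom.id_comp]
  have hcc' : c.comp c' = MonoidHom.id G' := by
    apply hepiG'
    · rw [MonoidHom.comp_assoc, hc1', hc1, MonoidHom.id_comp]
    · rw [MonoidHom.comp_assoc, hc2', hc2, MonoidHom.id_comp]
  have hg : gG'.comp c = gG := by
    apply hepiB
    · rw [MonoidHom.comp_assoc, hc1, hf1', hf1]
    · rw [MonoidHom.comp_assoc, hc2, hf2', hf2]
  refine ⟨{ toFun := fun x => ⟨c x, ?_⟩, invFun := fun y => ⟨c' y, ?_⟩,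
            left_inv := ?_, right_inv := ?_, map_mul' := ?_ }⟩
  case _ x =>
    have hx : gG (x : G) = 1 := x.2
    have hgx : gG' (c (x : G)) = gG (x : G) := DFunLike.congr_fun hg (x : G)
    show c (x : G) ∈ gG'.ker
    rw [MonoidHom.mem_ker, hgx, hx]
  case _ y =>
    have hy : gG' (y : G') = 1 := y.2
    have h1 : gG (c' (y : G')) = gG' (c (c' (y : G'))) := (DFunLike.congr_fun hg _).symm
    have h2 : c (c' (y : G')) = (y : G') := DFunLike.congr_fun hcc' (y : G')
    show c' (y : G') ∈ gG.ker
    rw [MonoidHom.mem_ker, h1, h2, hy]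
  case _ =>
    intro x
    ext
    exact DFunLike.congr_fun hcc (x : G)
  case _ =>
    intro y
    ext
    exact DFunLike.congr_fun hcc' (y : G')
  case _ =>
    intro x y
    ext
    exact map_mul c _ _

/-- The group completion of the pushout satisfies the pushout universal property
among commutative groups (at a universe where the monoid pushout property and the
completions are available). -/
lemma push_up {M N Q Mgp Ngp Qgp : Type*} [CommMonoid M] [CommMonoid N] [CommMonoid Q]
    [CommGroup Mgp] [CommGroup Ngp] [CommGroup Qgp]
    (h : M →* N) (i₁ i₂ : N →* Q)
    (ιM : M →* Mgp) (ιN : N →* Ngp) (ιQ : Q →* Qgp)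
    (hgp : Mgp →* Ngp) (hhgp : ∀ m : M, hgp (ιM m) = ιN (h m))
    (j₁ j₂ : Ngp →* Qgp) (hj₁ : j₁.comp ιN = ιQ.comp i₁) (hj₂ : j₂.comp ιN = ιQ.comp i₂)
    (T : Type*) [CommGroup T]
    (hpo_T : ∀ (a b : N →* T), a.comp h = b.comp h →
      ∃! c : Q →* T, c.comp i₁ = a ∧ c.comp i₂ = b)
    (hN_T : ∀ f' : N →* T, ∃! gl : Ngp →* T, gl.comp ιN = f')
    (hQ_T : ∀ f' : Q →* T, ∃! gl : Qgp →* T, gl.comp ιQ = f')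
    (a b : Ngp →* T) (hab : a.comp hgp = b.comp hgp) :
    ∃! c : Qgp →* T, c.comp j₁ = a ∧ c.comp j₂ = b := by
  have hab' : (a.comp ιN).comp h = (b.comp ιN).comp h := by
    ext m
    have := DFunLike.congr_fun hab (ιM m)
    simp only [MonoidHom.comp_apply] at this ⊢
    rw [← hhgp m]
    exact this
  obtain ⟨c₀, ⟨hc₀1, hc₀2⟩, hc₀u⟩ := hpo_T (a.comp ιN) (b.comp ιN) hab'
  obtain ⟨c, hc, hcu⟩ := hQ_T c₀
  have key1 : c.comp j₁ = a := by
    obtain ⟨u, hu, huu⟩ := hN_T (a.comp ιN)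
    rw [huu (c.comp j₁) ?_, huu a rfl]
    ext n
    simp only [MonoidHom.comp_apply]
    have e1 : j₁ (ιN n) = ιQ (i₁ n) := DFunLike.congr_fun hj₁ n
    rw [e1]
    exact (DFunLike.congr_fun hc (i₁ n)).trans (DFunLike.congr_fun hc₀1 n)
  have key2 : c.comp j₂ = b := by
    obtain ⟨u, hu, huu⟩ := hN_T (b.comp ιN)
    rw [huu (c.comp j₂) ?_, huu b rfl]
    ext n
    simp only [MonoidHom.comp_apply]
    have e1 : j₂ (ιN n) = ιQ (i₂ n) := DFunLike.congr_fun hj₂ n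
    rw [e1]
    exact (DFunLike.congr_fun hc (i₂ n)).trans (DFunLike.congr_fun hc₀2 n)
  refine ⟨c, ⟨key1, key2⟩, ?_⟩
  rintro c' ⟨h1, h2⟩
  apply hcu
  apply hc₀u
  constructor
  · ext n
    simp only [MonoidHom.comp_apply]
    have e1 : j₁ (ιN n) = ιQ (i₁ n) := DFunLike.congr_fun hj₁ n
    rw [← e1, ← MonoidHom.comp_apply c', h1]
  · ext n
    simp only [MonoidHom.comp_apply]
    have e1 : j₂ (ιN n) = ιQ (i₂ n) := DFunLike.congr_fun hj₂ n
    rw [← e1, ← MonoidHom.comp_apply c', h2]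

/-- For a homomorphism `h : M → N` of commutative monoids, with
`Q = N ⊕_M N` the pushout and `g : Q → N` the codiagonal, the kernel of the induced map
`Q^gp → N^gp` is isomorphic, as an abelian group, to the cokernel of `M^gp → N^gp`. -/
theorem stmt_1 {M N Q Mgp Ngp Qgp : Type*} [CommMonoid M] [CommMonoid N] [CommMonoid Q]
    [CommGroup Mgp] [CommGroup Ngp] [CommGroup Qgp]
    (h : M →* N) (i₁ i₂ : N →* Q) (hpo : IsMonoidPushout h h i₁ i₂)
    (g : Q →* N) (hg1 : g.comp i₁ = MonoidHom.id N) (hg2 : g.comp i₂ = MonoidHom.id N)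
    (ιM : M →* Mgp) (ιN : N →* Ngp) (ιQ : Q →* Qgp)
    (hM : IsGroupCompletion ιM) (hN : IsGroupCompletion ιN) (hQ : IsGroupCompletion ιQ)
    (ggp : Qgp →* Ngp) (hggp : ∀ q : Q, ggp (ιQ q) = ιN (g q))
    (hgp : Mgp →* Ngp) (hhgp : ∀ m : M, hgp (ιM m) = ιN (h m)) :
    Nonempty (ggp.ker ≃* Ngp ⧸ hgp.range) := by
  classical
  obtain ⟨j₁, hj₁, -⟩ :=
    completion_up MulEquiv.ulift ιN (fun f' => hN _ f') Qgp (ιQ.comp i₁)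
  obtain ⟨j₂, hj₂, -⟩ :=
    completion_up MulEquiv.ulift ιN (fun f' => hN _ f') Qgp (ιQ.comp i₂)
  -- `j₁ ∘ hgp = j₂ ∘ hgp`
  have hjf : j₁.comp hgp = j₂.comp hgp := by
    apply completion_unique MulEquiv.ulift ιM (fun f' => hM _ f')
    ext m
    simp only [MonoidHom.comp_apply]
    have e1 : j₁ (ιN (h m)) = ιQ (i₁ (h m)) := DFunLike.congr_fun hj₁ (h m)
    have e2 : j₂ (ιN (h m)) = ιQ (i₂ (h m)) := DFunLike.congr_fun hj₂ (h m)
    have e3 : i₁ (h m) = i₂ (h m) := DFunLike.congr_fun hpo.1 m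
    rw [hhgp m, e1, e2, e3]
  -- fold identities for `ggp`
  have hfold₁ : ggp.comp j₁ = MonoidHom.id Ngp := by
    apply completion_unique MulEquiv.ulift ιN (fun f' => hN _ f')
    ext n
    simp only [MonoidHom.comp_apply]
    have e1 : j₁ (ιN n) = ιQ (i₁ n) := DFunLike.congr_fun hj₁ n
    have e2 : g (i₁ n) = n := DFunLike.congr_fun hg1 n
    rw [e1, hggp (i₁ n), e2]
    rfl
  have hfold₂ : ggp.comp j₂ = MonoidHom.id Ngp := by
    apply completion_unique MulEquiv.ulift ιN (fun f' => hN _ f')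
    ext n
    simp only [MonoidHom.comp_apply]
    have e1 : j₂ (ιN n) = ιQ (i₂ n) := DFunLike.congr_fun hj₂ n
    have e2 : g (i₂ n) = n := DFunLike.congr_fun hg2 n
    rw [e1, hggp (i₂ n), e2]
    rfl
  -- transfer
  obtain ⟨e⟩ := aux_transfer j₁ j₂ (auxp₁ hgp) (auxp₂ hgp) ggp (auxg hgp)
    (by
      obtain ⟨c, hc, -⟩ := pushout_up MulEquiv.ulift hgp j₁ j₂
        (fun a b hab => push_up h i₁ i₂ ιM ιN ιQ hgp hhgp j₁ j₂ hj₁ hj₂ _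
          (fun a0 b0 hab0 => hpo.2 _ a0 b0 hab0)
          (fun f' => completion_up MulEquiv.ulift ιN (fun f'' => hN _ f'') _ f')
          (fun f' => completion_up MulEquiv.ulift ιQ (fun f'' => hQ _ f'') _ f') a b hab)
        (auxP hgp) (auxp₁ hgp) (auxp₂ hgp) (aux_comm hgp)
      exact ⟨c, hc⟩)
    (by
      obtain ⟨c', hc', -⟩ := aux_up hgp Qgp j₁ j₂ hjf
      exact ⟨c', hc'⟩)
    (fun u u' e1 e2 =>
      epi_of_up hgp j₁ j₂
        (fun a b hab => pushout_up MulEquiv.ulift hgp j₁ j₂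
          (fun a' b' hab' => push_up h i₁ i₂ ιM ιN ιQ hgp hhgp j₁ j₂ hj₁ hj₂ _
          (fun a0 b0 hab0 => hpo.2 _ a0 b0 hab0)
            (fun f' => completion_up MulEquiv.ulift ιN (fun f'' => hN _ f'') _ f')
            (fun f' => completion_up MulEquiv.ulift ιQ (fun f'' => hQ _ f'') _ f') a' b' hab')
          Qgp a b hab)
        hjf u u' e1 e2)
    (fun u u' e1 e2 =>
      epi_of_up hgp j₁ j₂
        (fun a b hab => pushout_up MulEquiv.ulift hgp j₁ j₂
          (fun a' b' hab' => push_up h i₁ i₂ ιM ιN ιQ hgp hhgp j₁ j₂ hj₁ hj₂ _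
          (fun a0 b0 hab0 => hpo.2 _ a0 b0 hab0)
            (fun f' => completion_up MulEquiv.ulift ιN (fun f'' => hN _ f'') _ f')
            (fun f' => completion_up MulEquiv.ulift ιQ (fun f'' => hQ _ f'') _ f') a' b' hab')
          Ngp a b hab)
        hjf u u' e1 e2)
    (fun u u' e1 e2 =>
      epi_of_up hgp (auxp₁ hgp) (auxp₂ hgp)
        (fun a b hab => aux_up hgp (auxP hgp) a b hab)
        (aux_comm hgp) u u' e1 e2)
    hfold₁ hfold₂ (aux_fold₁ hgp) (aux_fold₂ hgp)
  obtain ⟨e'⟩ := aux_iso hgp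
  exact ⟨e.trans e'⟩
end

section
/- For every abelian group H, the module of Kähler differentials Ω_{ℤ[H]/ℤ} of the group algebra ℤ[H] over ℤ is isomorphic as a ℤ[H]-module to H ⊗_ℤ ℤ[H], via the map sending d[h] to h ⊗ [h]. -/
/-! The derivation `[h] ↦ [h] ⊗ h` of `R[H]` induces `Ω[R[H]⁄R] → R[H] ⊗ H`. Conversely, by the
Leibniz rule the logarithmic differential `h ↦ [-h] d[h]` is additive in `h`, so it extends
`R[H]`-linearly to `R[H] ⊗ H → Ω[R[H]⁄R]`. The two maps are mutually inverse because
`d[h] = [h] • [-h] d[h]` and `Ω[R[H]⁄R]` is generated by the differentials of monomials. -/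

open scoped TensorProduct

namespace AddMonoidAlgebra

open TensorProduct KaehlerDifferential

variable (R H : Type*) [CommRing R] [AddCommGroup H]

noncomputable def logDerivationₗ : R[H] →ₗ[R] R[H] ⊗[ℤ] H :=
  Finsupp.lsum R (fun h => LinearMap.toSpanSingleton R _ (single h (1 : R) ⊗ₜ[ℤ] h))
    ∘ₗ (coeffLinearEquiv R).toLinearMap

variable {R H}

theorem logDerivationₗ_single (h : H) (r : R) :
    logDerivationₗ R H (single h r) = single h r ⊗ₜ[ℤ] h := by
  unfold logDerivationₗ
  simp [smul_tmul']

variable (R H) in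
noncomputable def logDerivation : Derivation R R[H] (R[H] ⊗[ℤ] H) where
  toLinearMap := logDerivationₗ R H
  map_one_eq_zero' := by simp only [one_def, logDerivationₗ_single, tmul_zero]
  leibniz' a b := by
    induction a using induction_linear with
    | zero => simp
    | add a a' ha ha' => simp only [add_mul, map_add, ha, ha', add_smul, smul_add]; abel
    | single g r =>
      induction b using induction_linear with
      | zero => simp
      | add b b' hb hb' => simp only [mul_add, map_add, hb, hb', add_smul, smul_add]; abel
      | single h s =>
        simp only [single_mul_single, logDerivationₗ_single, smul_tmul', smul_eq_mul, tmul_add]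
        rw [add_comm h g, mul_comm s r, add_comm]

theorem logDerivation_single (h : H) (r : R) :
    logDerivation R H (single h r) = single h r ⊗ₜ[ℤ] h :=
  logDerivationₗ_single h r

theorem D_single_add (g h : H) :
    D R R[H] (single (g + h) (1 : R)) =
      single g (1 : R) • D R R[H] (single h 1) + single h (1 : R) • D R R[H] (single g 1) := by
  rw [← Derivation.leibniz, single_mul_single, mul_one]

variable (R H) in
noncomputable def dlog : H →+ Ω[R[H]⁄R] where
  toFun h := single (-h) (1 : R) • D R R[H] (single h 1)
  map_zero' := by simp [← one_def]
  map_add' g h := by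
    rw [D_single_add, smul_add, smul_smul, smul_smul, single_mul_single, single_mul_single,
      mul_one, add_comm]
    congr 3 <;> abel

theorem dlog_apply (h : H) : dlog R H h = single (-h) (1 : R) • D R R[H] (single h 1) := rfl

theorem D_single (h : H) (r : R) : D R R[H] (single h r) = single h r • dlog R H h := by
  have single_zero_eq : single 0 r = algebraMap R R[H] r := rfl
  rw [dlog_apply, smul_smul, single_mul_single, add_neg_cancel, mul_one, single_zero_eq, algebraMap_smul,
    ← Derivation.map_smul, smul_single', mul_one]

variable (R H) in
noncomputable def tensorToKaehler : R[H] ⊗[ℤ] H →ₗ[R[H]] Ω[R[H]⁄R] :=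
  AlgebraTensorModule.lift (LinearMap.toSpanSingleton R[H] _ (dlog R H).toIntLinearMap)

theorem tensorToKaehler_tmul (x : R[H]) (h : H) : tensorToKaehler R H (x ⊗ₜ h) = x • dlog R H h :=
  rfl

theorem liftKaehlerDifferential_dlog (h : H) :
    (logDerivation R H).liftKaehlerDifferential (dlog R H h) = 1 ⊗ₜ h := by
  rw [dlog_apply, map_smul, Derivation.liftKaehlerDifferential_comp_D, logDerivation_single,
    smul_tmul', smul_eq_mul, single_mul_single, neg_add_cancel, mul_one, ← one_def]

theorem tensorToKaehler_logDerivation (s : R[H]) :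
    tensorToKaehler R H (logDerivation R H s) = D R R[H] s := by
  induction s using induction_linear with
  | zero => simp
  | add s s' hs hs' => rw [map_add, map_add, hs, hs', map_add]
  | single h r => rw [logDerivation_single, tensorToKaehler_tmul, D_single]

variable (R H) in
noncomputable def kaehlerDifferentialEquiv : Ω[R[H]⁄R] ≃ₗ[R[H]] R[H] ⊗[ℤ] H :=
  .ofLinearMap (logDerivation R H).liftKaehlerDifferential (tensorToKaehler R H)
    (AlgebraTensorModule.ext fun x h => by
      rw [LinearMap.comp_apply, tensorToKaehler_tmul, map_smul, liftKaehlerDifferential_dlog,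
        smul_tmul', smul_eq_mul, mul_one, LinearMap.id_apply])
    (Derivation.liftKaehlerDifferential_unique _ _ <| Derivation.ext fun s => by
      simp [tensorToKaehler_logDerivation])

theorem kaehlerDifferentialEquiv_D_single (h : H) (r : R) :
    kaehlerDifferentialEquiv R H (D R R[H] (single h r)) = single h r ⊗ₜ h :=
  (Derivation.liftKaehlerDifferential_comp_D _ _).trans (logDerivation_single h r)

end AddMonoidAlgebra

/-- For every abelian group `H`, the module of Kähler differentials of the
group algebra `ℤ[H]` over `ℤ` is isomorphic as a `ℤ[H]`-module to `ℤ[H] ⊗_ℤ H`, via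
the map sending `d[h]` to `[h] ⊗ h`. -/
theorem stmt_5 (H : Type*) [AddCommGroup H] :
    ∃ e : Ω[AddMonoidAlgebra ℤ H⁄ℤ] ≃ₗ[AddMonoidAlgebra ℤ H]
        (AddMonoidAlgebra ℤ H ⊗[ℤ] H),
      ∀ h : H,
        e ((KaehlerDifferential.D ℤ (AddMonoidAlgebra ℤ H))
            (AddMonoidAlgebra.single h 1)) =
          AddMonoidAlgebra.single h (1 : ℤ) ⊗ₜ[ℤ] h :=
  ⟨AddMonoidAlgebra.kaehlerDifferentialEquiv ℤ H, fun h =>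
    AddMonoidAlgebra.kaehlerDifferentialEquiv_D_single h 1⟩
end

section
/- Let B be a commutative ring, J an ideal of B, t > 0 an integer, and (Fₙ) a direct system of half-exact functors from B/J^t-modules to B/J^t-modules (i.e., for every short exact sequence 0 → U → W → V → 0 of B/J^t-modules, the sequence Fₙ(U) → Fₙ(W) → Fₙ(V) is exact). If colim_n Fₙ(W) = 0 for every B/J-module W (viewed as B/J^t-module), then colim_n Fₙ(W) = 0 for every B/J^t-module W. -/
/-!
Let `0 → N → W → W/N → 0` be exact and `x ∈ F i (W)`. If the image of `x` dies in the colimit of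
the `F (W/N)`, then by half-exactness `x` comes, after moving along the system, from some
`F j (N)`, and it dies once the colimit vanishes on `N`. So the modules on which the colimit
vanishes are closed under extensions. A module `W` killed by `Iˢ⁺¹` is an extension of `W/IW`
(killed by `I`) by `IW` (killed by `Iˢ`), and over `B/Jᵗ` every module is killed by
`(J/Jᵗ)ᵗ = 0`.
-/

open CategoryTheory

universe v w

section Colimit

variable {R S : Type*} [Ring R] [Ring S] {ι : Type*} [Preorder ι]
  {F : ι → ModuleCat.{v} R ⥤ ModuleCat.{w} S}

/-- `colim_i F i (W) = 0`, phrased elementwise. -/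
def ColimitVanishes (τ : ∀ {i j : ι}, i ≤ j → (F i ⟶ F j)) (W : ModuleCat.{v} R) : Prop :=
  ∀ (i : ι) (x : (F i).obj W), ∃ (j : ι) (hij : i ≤ j), (τ hij).app W x = 0

variable {τ : ∀ {i j : ι}, i ≤ j → (F i ⟶ F j)}

theorem ColimitVanishes.of_exact
    (hτ_trans : ∀ {i j k : ι} (hij : i ≤ j) (hjk : j ≤ k), τ (hij.trans hjk) = τ hij ≫ τ hjk)
    {U W V : ModuleCat.{v} R} {f : U ⟶ W} {g : W ⟶ V}
    (hexact : ∀ i, Function.Exact ((F i).map f) ((F i).map g))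
    (hU : ColimitVanishes @τ U) (hV : ColimitVanishes @τ V) : ColimitVanishes @τ W := by
  intro i x
  obtain ⟨j, hij, hj⟩ := hV i ((F i).map g x)
  have hx : (F j).map g ((τ hij).app W x) = 0 := by
    rw [← NatTrans.naturality_apply, hj]
  obtain ⟨y, hy⟩ := (hexact j _).mp hx
  obtain ⟨k, hjk, hk⟩ := hU j y
  refine ⟨k, hij.trans hjk, ?_⟩
  rw [hτ_trans hij hjk, NatTrans.comp_app, ConcreteCategory.comp_apply, ← hy,
    NatTrans.naturality_apply, hk, map_zero]

end Colimit

theorem ColimitVanishes.of_pow_le_annihilator {R S : Type*} [CommRing R] [Ring S]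
    {ι : Type*} [Preorder ι] {F : ι → ModuleCat.{v} R ⥤ ModuleCat.{w} S}
    {τ : ∀ {i j : ι}, i ≤ j → (F i ⟶ F j)} (I : Ideal R)
    (hτ_trans : ∀ {i j k : ι} (hij : i ≤ j) (hjk : j ≤ k), τ (hij.trans hjk) = τ hij ≫ τ hjk)
    (hhalf : ∀ (i : ι) (U W V : ModuleCat.{v} R) (f : U ⟶ W) (g : W ⟶ V),
      Function.Injective f → Function.Surjective g → Function.Exact f g →
      Function.Exact ((F i).map f) ((F i).map g))
    (hbase : ∀ W : ModuleCat.{v} R, I ≤ Module.annihilator R W → ColimitVanishes @τ W)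
    (s : ℕ) {W : ModuleCat.{v} R} (hW : I ^ s ≤ Module.annihilator R W) :
    ColimitVanishes @τ W := by
  induction s generalizing W with
  | zero => exact hbase W (le_top.trans (by simpa using hW))
  | succ s ih =>
    let N : Submodule R W := I • ⊤
    have hN : I ^ s ≤ Module.annihilator R N := by
      rwa [Submodule.le_annihilator_iff, ← Submodule.mul_smul, ← pow_succ,
        ← Submodule.le_annihilator_iff, Submodule.annihilator_top]
    have hquot : I ≤ Module.annihilator R (W ⧸ N) :=
      (Module.isTorsionBySet_iff_subset_annihilator R _).mp
        (Module.isTorsionBySet_quotient_ideal_smul W I)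
    exact ColimitVanishes.of_exact hτ_trans
      (fun i ↦ hhalf i (.of R N) W (.of R (W ⧸ N)) (ModuleCat.ofHom N.subtype)
        (ModuleCat.ofHom N.mkQ) Subtype.val_injective N.mkQ_surjective
        (LinearMap.exact_subtype_mkQ N))
      (ih hN) (hbase _ hquot)

theorem stmt_9_general {B : Type} [CommRing B] (J : Ideal B) (t : ℕ)
    {ι : Type} [Preorder ι]
    (F : ι → ModuleCat (B ⧸ J ^ t) ⥤ ModuleCat (B ⧸ J ^ t))
    (τ : ∀ {i j : ι}, i ≤ j → (F i ⟶ F j))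
    (hτ_trans : ∀ {i j k : ι} (hij : i ≤ j) (hjk : j ≤ k),
      τ (hij.trans hjk) = τ hij ≫ τ hjk)
    (hhalf : ∀ (i : ι) (U W V : ModuleCat (B ⧸ J ^ t)) (f : U ⟶ W) (g : W ⟶ V),
      Function.Injective f → Function.Surjective g → Function.Exact f g →
      Function.Exact ((F i).map f) ((F i).map g))
    (hvan : ∀ W : ModuleCat (B ⧸ J ^ t),
      (∀ b ∈ J, ∀ w : W, (Ideal.Quotient.mk (J ^ t) b) • w = 0) →
      ∀ (i : ι) (x : (F i).obj W), ∃ (j : ι) (hij : i ≤ j), ((τ hij).app W) x = 0) :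
    ∀ (W : ModuleCat (B ⧸ J ^ t)) (i : ι) (x : (F i).obj W),
      ∃ (j : ι) (hij : i ≤ j), ((τ hij).app W) x = 0 := by
  let I := J.map (Ideal.Quotient.mk (J ^ t))
  have hbase (W : ModuleCat (B ⧸ J ^ t)) (hW : I ≤ Module.annihilator _ W) :
      ColimitVanishes @τ W :=
    hvan W fun b hb w ↦ Module.mem_annihilator.mp (hW (Ideal.mem_map_of_mem _ hb)) w
  have hnil : I ^ t = ⊥ := by rw [← Ideal.map_pow, Ideal.map_quotient_self]
  intro W
  exact ColimitVanishes.of_pow_le_annihilator I hτ_trans hhalf hbase t (hnil ▸ bot_le)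

/-- Let `B` be a commutative ring, `J` an ideal, `t > 0`, and `(Fₙ)` a
direct system of half-exact functors on `B/Jᵗ`-modules. If the (elementwise) colimit
`colim_n Fₙ(W)` vanishes for every `B/J`-module `W` (i.e. every `B/Jᵗ`-module killed
by `J`), then it vanishes for every `B/Jᵗ`-module `W`. -/
theorem stmt_9 {B : Type} [CommRing B] (J : Ideal B) (t : ℕ) (ht : 0 < t)
    {ι : Type} [Preorder ι] [IsDirected ι (· ≤ ·)] [Nonempty ι]
    (F : ι → ModuleCat (B ⧸ J ^ t) ⥤ ModuleCat (B ⧸ J ^ t))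
    (τ : ∀ {i j : ι}, i ≤ j → (F i ⟶ F j))
    (hτ_refl : ∀ i : ι, τ (le_refl i) = 𝟙 (F i))
    (hτ_trans : ∀ {i j k : ι} (hij : i ≤ j) (hjk : j ≤ k),
      τ (hij.trans hjk) = τ hij ≫ τ hjk)
    (hhalf : ∀ (i : ι) (U W V : ModuleCat (B ⧸ J ^ t)) (f : U ⟶ W) (g : W ⟶ V),
      Function.Injective f → Function.Surjective g → Function.Exact f g →
      Function.Exact ((F i).map f) ((F i).map g))
    (hvan : ∀ W : ModuleCat (B ⧸ J ^ t),
      (∀ b ∈ J, ∀ w : W, (Ideal.Quotient.mk (J ^ t) b) • w = 0) →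
      ∀ (i : ι) (x : (F i).obj W), ∃ (j : ι) (hij : i ≤ j), ((τ hij).app W) x = 0) :
    ∀ (W : ModuleCat (B ⧸ J ^ t)) (i : ι) (x : (F i).obj W),
      ∃ (j : ι) (hij : i ≤ j), ((τ hij).app W) x = 0 :=
  stmt_9_general J t F τ hτ_trans hhalf hvan
end

section
/- Let (C, P) → (B, N) be a homomorphism of log rings such that C → B is surjective with kernel I satisfying I² = 0, the map P → N is the quotient making the homomorphism strict, and the subgroup 1 + I of C* acts freely on P. Then the map (1 + I) × P → P ×_N P sending (u, p) to (p, u·p) is an isomorphism of monoids (equivalently, a bijection). As a consequence, any morphism between two such (A,M)-extensions of (B,N) by the same I is automatically an isomorphism. -/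
/-- `(C, P, α)` is a log ring: `α` restricts to an isomorphism `α⁻¹(C*) ≅ C*`. -/
def IsLogRing {C P : Type*} [CommRing C] [CommMonoid P] (α : P →* C) : Prop :=
  ∀ u : Cˣ, ∃! p : P, α p = (u : C)

/-- Strictness of a surjective homomorphism of log rings `(τs, τf) : (C,P,α) → (B,N,β)`:
the induced log structure `τ*(P) = P ⊕_{(τs∘α)⁻¹(B*)} B*` maps isomorphically onto `N`
(expressed via the concrete description of the pushout along a group). -/
def IsStrict {C B P N : Type*} [CommRing C] [CommRing B] [CommMonoid P] [CommMonoid N]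
    (α : P →* C) (β : N →* B) (τs : C →+* B) (τf : P →* N) : Prop :=
  (∀ n : N, ∃ (p : P) (ν : N), IsUnit (β ν) ∧ n = τf p * ν) ∧
  (∀ (p₁ p₂ : P) (ν₁ ν₂ : N), IsUnit (β ν₁) → IsUnit (β ν₂) →
    τf p₁ * ν₁ = τf p₂ * ν₂ →
    ∃ s₁ s₂ : P, IsUnit (τs (α s₁)) ∧ IsUnit (τs (α s₂)) ∧
      p₁ * s₁ = p₂ * s₂ ∧ ν₁ * τf s₁ = ν₂ * τf s₂)

/-! Strictness says that two elements of `P` with the same image in `N` become equal after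
multiplying by elements lying over units of `B`. Since `I² = 0`, units of `B` lift to units of
`C`, and since `(C, P)` is a log ring these come from units of `P`; dividing gives `q` over
`1 + I` with `q * p₁ = p₂`, and freeness of the action makes `q` unique.

For a morphism of extensions, the ring map is bijective by the five lemma for
`0 → I → C → B → 0`. The monoid map is injective because an element of `1 + I` fixing a point
is `1`, and surjective because `P → N` is surjective by strictness and the fibres of `P' → N`
are `(1 + I)`-orbits, which the morphism respects. -/

namespace IsLogRing

variable {C P : Type*} [CommRing C] [CommMonoid P] {α : P →* C}

theorem eq_of_map_eq (hα : IsLogRing α) {p q : P} (h : α p = α q) (hq : IsUnit (α q)) :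
    p = q :=
  (hα hq.unit).unique (h.trans hq.unit_spec.symm) hq.unit_spec.symm

theorem exists_map_eq (hα : IsLogRing α) {c : C} (hc : IsUnit c) : ∃ p, α p = c :=
  hc.unit_spec ▸ (hα hc.unit).exists

theorem isUnit_of_isUnit_map (hα : IsLogRing α) {p : P} (hp : IsUnit (α p)) : IsUnit p := by
  obtain ⟨q, hq⟩ := hα.exists_map_eq hp.unit⁻¹.isUnit
  refine IsUnit.of_mul_eq_one (a := p) q (hα.eq_of_map_eq ?_ (by simp))
  rw [map_mul, hq, map_one, IsUnit.mul_val_inv]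

end IsLogRing

theorem RingHom.isUnit_of_isUnit_map_of_isNilpotent_ker {R S : Type*} [CommRing R] [Ring S]
    (f : R →+* S) (hf : Function.Surjective f) (hker : IsNilpotent (RingHom.ker f)) {r : R}
    (hr : IsUnit (f r)) : IsUnit r := by
  obtain ⟨s, hs⟩ := hf ↑hr.unit⁻¹
  have hmem : r * s - 1 ∈ RingHom.ker f := by
    rw [RingHom.mem_ker, map_sub, map_mul, hs, map_one, IsUnit.mul_val_inv, sub_self]
  have hnil : IsNilpotent (r * s - 1) := by
    obtain ⟨n, hn⟩ := hker
    exact ⟨n, by simpa [hn] using Ideal.pow_mem_pow hmem n⟩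
  exact isUnit_of_mul_isUnit_left (by simpa using hnil.isUnit_add_one)

theorem RingHom.bijective_of_bijOn_ker {R S T : Type*} [Ring R] [Ring S] [Ring T]
    (f : R →+* S) {g : R →+* T} {g' : S →+* T} (hcomp : g'.comp f = g)
    (hg : Function.Surjective g)
    (hker : Set.BijOn f (RingHom.ker g : Set R) (RingHom.ker g' : Set S)) :
    Function.Bijective f := by
  have hgf (r : R) : g' (f r) = g r := RingHom.congr_fun hcomp r
  refine ⟨(injective_iff_map_eq_zero f).mpr fun r hr => ?_, fun s => ?_⟩
  · have hrker : r ∈ RingHom.ker g := by rw [RingHom.mem_ker, ← hgf, hr, map_zero]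
    exact hker.injOn hrker (RingHom.ker g).zero_mem (by rw [hr, map_zero])
  · obtain ⟨r, hr⟩ := hg (g' s)
    have hsker : s - f r ∈ RingHom.ker g' := by rw [RingHom.mem_ker, map_sub, hgf, hr, sub_self]
    obtain ⟨i, -, hi⟩ := hker.surjOn hsker
    exact ⟨r + i, by rw [map_add, hi, add_sub_cancel]⟩

section Extension

variable {C B P N : Type*} [CommRing C] [CommRing B] [CommMonoid P] [CommMonoid N]
  {α : P →* C} {β : N →* B} {τs : C →+* B} {τf : P →* N}

theorem map_eq_one_of_ringHom_map_eq_one (hlogB : IsLogRing β)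
    (hcomm : ∀ p : P, β (τf p) = τs (α p)) {q : P} (hq : τs (α q) = 1) : τf q = 1 :=
  hlogB.eq_of_map_eq (by rw [hcomm, hq, map_one]) (by simp)

theorem eq_one_of_mul_eq_self (hlogC : IsLogRing α)
    (hfree : ∀ (u : Cˣ) (q : P), α q = (u : C) → τs (u : C) = 1 →
      (∃ p : P, q * p = p) → (u : C) = 1)
    {q p : P} (hq : IsUnit (α q)) (hq1 : τs (α q) = 1) (hqp : q * p = p) : q = 1 := by
  have hαq : α q = 1 :=
    hq.unit_spec.symm.trans (hfree hq.unit q hq.unit_spec.symm (by rwa [hq.unit_spec]) ⟨p, hqp⟩)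
  exact hlogC.eq_of_map_eq (by rw [hαq, map_one]) (by simp)

theorem eq_of_mul_eq_mul (hlogC : IsLogRing α)
    (hfree : ∀ (u : Cˣ) (q : P), α q = (u : C) → τs (u : C) = 1 →
      (∃ p : P, q * p = p) → (u : C) = 1)
    {q q' p : P} (hq : IsUnit (α q)) (hq1 : τs (α q) = 1) (hq' : IsUnit (α q'))
    (hq'1 : τs (α q') = 1) (h : q * p = q' * p) : q = q' := by
  obtain ⟨u, rfl⟩ := hlogC.isUnit_of_isUnit_map hq'
  suffices q * ↑u⁻¹ = 1 by rwa [Units.mul_inv_eq_one] at this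
  have hu : τs (α ↑u⁻¹) = 1 := by
    have h1 : τs (α u) * τs (α ↑u⁻¹) = 1 := by
      rw [← map_mul, ← map_mul, Units.mul_inv, map_one, map_one]
    rwa [hq'1, one_mul] at h1
  refine eq_one_of_mul_eq_self hlogC hfree (p := u * p) ?_ ?_ ?_
  · rw [map_mul]; exact hq.mul ((Units.map α u⁻¹).isUnit)
  · rw [map_mul, map_mul, hq1, hu, one_mul]
  · rw [mul_assoc, Units.inv_mul_cancel_left, h]

theorem exists_mul_eq_of_map_eq (hlogC : IsLogRing α) (hτs : Function.Surjective τs)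
    (hker : IsNilpotent (RingHom.ker τs)) (hcomm : ∀ p : P, β (τf p) = τs (α p))
    (hstrict : IsStrict α β τs τf) {p₁ p₂ : P} (h : τf p₁ = τf p₂) :
    ∃ q : P, (IsUnit (α q) ∧ τs (α q) = 1) ∧ q * p₁ = p₂ := by
  obtain ⟨s₁, s₂, hs₁, hs₂, hps, hss⟩ :=
    hstrict.2 p₁ p₂ 1 1 (by simp) (by simp) (by rw [mul_one, mul_one, h])
  have hαs₁ := τs.isUnit_of_isUnit_map_of_isNilpotent_ker hτs hker hs₁
  obtain ⟨u, rfl⟩ :=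
    hlogC.isUnit_of_isUnit_map (τs.isUnit_of_isUnit_map_of_isNilpotent_ker hτs hker hs₂)
  have hτ : τs (α s₁) = τs (α u) := by rw [← hcomm, ← hcomm, ← one_mul (τf s₁), hss, one_mul]
  refine ⟨s₁ * ↑u⁻¹, ⟨?_, ?_⟩, ?_⟩
  · rw [map_mul]; exact hαs₁.mul (Units.map α u⁻¹).isUnit
  · rw [map_mul, map_mul, hτ, ← map_mul, ← map_mul, Units.mul_inv, map_one, map_one]
  · rw [mul_right_comm, mul_comm s₁, hps, Units.mul_inv_cancel_right]

theorem map_eq_iff_existsUnique_mul_eq (hlogC : IsLogRing α) (hlogB : IsLogRing β)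
    (hτs : Function.Surjective τs) (hker : IsNilpotent (RingHom.ker τs))
    (hcomm : ∀ p : P, β (τf p) = τs (α p)) (hstrict : IsStrict α β τs τf)
    (hfree : ∀ (u : Cˣ) (q : P), α q = (u : C) → τs (u : C) = 1 →
      (∃ p : P, q * p = p) → (u : C) = 1)
    (p₁ p₂ : P) :
    τf p₁ = τf p₂ ↔ ∃! q : P, (IsUnit (α q) ∧ τs (α q) = 1) ∧ q * p₁ = p₂ := by
  refine ⟨fun h => ?_, fun ⟨q, ⟨⟨_, hq1⟩, hqp⟩, _⟩ => ?_⟩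
  · obtain ⟨q, hq, hqp⟩ := exists_mul_eq_of_map_eq hlogC hτs hker hcomm hstrict h
    exact ⟨q, ⟨hq, hqp⟩, fun q' ⟨hq', hq'p⟩ =>
      eq_of_mul_eq_mul hlogC hfree hq'.1 hq'.2 hq.1 hq.2 (hq'p.trans hqp.symm)⟩
  · rw [← hqp, map_mul, map_eq_one_of_ringHom_map_eq_one hlogB hcomm hq1, one_mul]

theorem surjective_of_isStrict (hlogC : IsLogRing α) (hlogB : IsLogRing β)
    (hτs : Function.Surjective τs) (hker : IsNilpotent (RingHom.ker τs))
    (hcomm : ∀ p : P, β (τf p) = τs (α p)) (hstrict : IsStrict α β τs τf) :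
    Function.Surjective τf := by
  intro n
  obtain ⟨p, ν, hν, rfl⟩ := hstrict.1 n
  obtain ⟨c, hc⟩ := hτs (β ν)
  obtain ⟨r, hr⟩ := hlogC.exists_map_eq (τs.isUnit_of_isUnit_map_of_isNilpotent_ker hτs hker
    (hc ▸ hν))
  exact ⟨p * r, by rw [map_mul, hlogB.eq_of_map_eq (p := τf r) (by rw [hcomm, hr, hc]) hν]⟩

variable {C' P' : Type*} [CommRing C'] [CommMonoid P'] {α' : P' →* C'} {τs' : C' →+* B}
  {τf' : P' →* N} {gs : C →+* C'} {gf : P →* P'}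

theorem exists_map_eq_of_isUnit (hlogC : IsLogRing α) (hlogC' : IsLogRing α')
    (hgs : Function.Bijective gs) (hα : ∀ p : P, α' (gf p) = gs (α p)) {q' : P'}
    (hq' : IsUnit (α' q')) : ∃ q, gf q = q' := by
  obtain ⟨d, hd⟩ := hgs.2 (α' q')
  have hdu : IsUnit d := (isUnit_map_iff (RingEquiv.ofBijective gs hgs) d).mp (hd ▸ hq')
  obtain ⟨q, hq⟩ := hlogC.exists_map_eq hdu
  exact ⟨q, hlogC'.eq_of_map_eq (by rw [hα, hq, hd]) hq'⟩

theorem injective_of_extension_morphism (hlogC : IsLogRing α) (hτs : Function.Surjective τs)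
    (hker : IsNilpotent (RingHom.ker τs)) (hcomm : ∀ p : P, β (τf p) = τs (α p))
    (hstrict : IsStrict α β τs τf) (hlogC' : IsLogRing α')
    (hfree' : ∀ (u : C'ˣ) (q : P'), α' q = (u : C') → τs' (u : C') = 1 →
      (∃ p : P', q * p = p) → (u : C') = 1)
    (hgs : Function.Injective gs) (hcs : τs'.comp gs = τs) (hcf : τf'.comp gf = τf)
    (hα : ∀ p : P, α' (gf p) = gs (α p)) :
    Function.Injective gf := by
  intro p₁ p₂ h
  have hτf : τf p₁ = τf p₂ := by
    rw [← DFunLike.congr_fun hcf p₁, ← DFunLike.congr_fun hcf p₂, MonoidHom.comp_apply,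
      MonoidHom.comp_apply, h]
  obtain ⟨q, ⟨hq, hq1⟩, rfl⟩ := exists_mul_eq_of_map_eq hlogC hτs hker hcomm hstrict hτf
  have hgfq : gf q = 1 := by
    refine eq_one_of_mul_eq_self hlogC' hfree' (p := gf p₁) ?_ ?_ ?_
    · rw [hα]; exact hq.map gs
    · rw [hα, ← RingHom.comp_apply, hcs, hq1]
    · rw [← map_mul, h]
  have hαq : α q = 1 := hgs (by rw [← hα, hgfq, map_one, map_one])
  rw [hlogC.eq_of_map_eq (p := q) (q := 1) (by rw [hαq, map_one]) (by simp), one_mul]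

theorem surjective_of_extension_morphism (hlogC : IsLogRing α) (hlogB : IsLogRing β)
    (hτs : Function.Surjective τs) (hker : IsNilpotent (RingHom.ker τs))
    (hcomm : ∀ p : P, β (τf p) = τs (α p)) (hstrict : IsStrict α β τs τf)
    (hlogC' : IsLogRing α') (hτs' : Function.Surjective τs')
    (hker' : IsNilpotent (RingHom.ker τs')) (hcomm' : ∀ p : P', β (τf' p) = τs' (α' p))
    (hstrict' : IsStrict α' β τs' τf') (hgs : Function.Bijective gs) (hcf : τf'.comp gf = τf)
    (hα : ∀ p : P, α' (gf p) = gs (α p)) :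
    Function.Surjective gf := by
  intro p'
  obtain ⟨p, hp⟩ := surjective_of_isStrict hlogC hlogB hτs hker hcomm hstrict (τf' p')
  obtain ⟨q', ⟨hq', -⟩, rfl⟩ := exists_mul_eq_of_map_eq hlogC' hτs' hker' hcomm' hstrict'
    ((DFunLike.congr_fun hcf p).trans hp)
  obtain ⟨q, rfl⟩ := exists_map_eq_of_isUnit hlogC hlogC' hgs hα hq'
  exact ⟨q * p, map_mul gf q p⟩

end Extension

/-- For an extension `τ : (C,P) → (B,N)` of log rings (strict surjection
with square-zero kernel `I` and `1 + I` acting freely on `P`), the map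
`(1 + I) × P → P ×_N P, (u, p) ↦ (p, u·p)` is a bijection; expressed elementwise:
`τf p₁ = τf p₂` iff there is a unique `q ∈ P` lying over a unit of `1 + I` with
`q·p₁ = p₂`. As a consequence, any morphism between two such extensions of `(B,N)` by
the same `I` is automatically an isomorphism. -/
theorem stmt_10 {C B P N : Type*} [CommRing C] [CommRing B] [CommMonoid P] [CommMonoid N]
    (α : P →* C) (β : N →* B) (hlogC : IsLogRing α) (hlogB : IsLogRing β)
    (τs : C →+* B) (hτs : Function.Surjective τs)
    (hker : (RingHom.ker τs) ^ 2 = ⊥)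
    (τf : P →* N) (hcomm : ∀ p : P, β (τf p) = τs (α p))
    (hstrict : IsStrict α β τs τf)
    (hfree : ∀ (u : Cˣ) (q : P), α q = (u : C) → τs (u : C) = 1 →
      (∃ p : P, q * p = p) → (u : C) = 1) :
    (∀ p₁ p₂ : P, τf p₁ = τf p₂ ↔
      ∃! q : P, (IsUnit (α q) ∧ τs (α q) = 1) ∧ q * p₁ = p₂) ∧
    (∀ (C' P' : Type*) [CommRing C'] [CommMonoid P'],
      ∀ (α' : P' →* C') (_ : IsLogRing α')
        (τs' : C' →+* B) (_ : Function.Surjective τs')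
        (_ : (RingHom.ker τs') ^ 2 = ⊥)
        (τf' : P' →* N) (_ : ∀ p : P', β (τf' p) = τs' (α' p))
        (_ : IsStrict α' β τs' τf')
        (_ : ∀ (u : C'ˣ) (q : P'), α' q = (u : C') → τs' (u : C') = 1 →
          (∃ p : P', q * p = p) → (u : C') = 1)
        (hs : C →+* C') (hf : P →* P'),
        τs'.comp hs = τs → τf'.comp hf = τf →
        (∀ p : P, α' (hf p) = hs (α p)) →
        Set.BijOn hs (RingHom.ker τs : Set C) (RingHom.ker τs' : Set C') →
        Function.Bijective hf ∧ Function.Bijective hs) := by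
  have hnil : IsNilpotent (RingHom.ker τs) := ⟨2, hker⟩
  refine ⟨map_eq_iff_existsUnique_mul_eq hlogC hlogB hτs hnil hcomm hstrict hfree, ?_⟩
  intro C' P' _ _ α' hlogC' τs' hτs' hker' τf' hcomm' hstrict' hfree' hs hf hcs hcf hα hkerBij
  have hs_bij : Function.Bijective hs := hs.bijective_of_bijOn_ker hcs hτs hkerBij
  refine ⟨⟨?_, ?_⟩, hs_bij⟩
  · exact injective_of_extension_morphism hlogC hτs hnil hcomm hstrict hlogC' hfree' hs_bij.1
      hcs hcf hα
  · exact surjective_of_extension_morphism hlogC hlogB hτs hnil hcomm hstrict hlogC' hτs'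
      ⟨2, hker'⟩ hcomm' hstrict' hs_bij hcf hα
end

section
/- Let M be a finitely generated commutative monoid, (A, 𝔪, k) a noetherian local ring, and α : M → (A, ·) a local monoid homomorphism (α(M ∖ M*) ⊆ 𝔪). Let J be a proper ideal of A, let 𝔞 be the ideal of ℤ[M] generated by all differences a − b with a, b ∈ α⁻¹(J), and let I be the ideal of A generated by α(M) ∩ J. Then 𝔞·A = I (where 𝔞·A denotes the extension of 𝔞 along ℤ[M] → A). -/
/-!
Every element `x = α m` of `J` lies in the maximal ideal, so `1 - x` is a unit; then
`x = (1 - x)⁻¹ (α m - α (m * m))` is the image of the difference `m - m * m` of two elements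
of `α⁻¹(J)`.
-/

theorem IsLocalRing.mem_span_singleton_sub_mul_self {A : Type*} [CommRing A] [IsLocalRing A]
    {x : A} (hx : x ∈ maximalIdeal A) : x ∈ Ideal.span {x - x * x} := by
  have hunit : IsUnit (1 - x) := isUnit_one_sub_self_of_mem_nonunits x hx
  rw [show x - x * x = x * (1 - x) by ring, Ideal.span_singleton_mul_right_unit hunit]
  exact Ideal.mem_span_singleton_self x

section DifferenceIdeal

variable {M : Type*} [CommMonoid M] {A : Type*} [CommRing A] (α : M →* A) (J : Ideal A)

noncomputable def differenceIdeal : Ideal (MonoidAlgebra ℤ M) :=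
  Ideal.span {x : MonoidAlgebra ℤ M | ∃ a b : M, α a ∈ J ∧ α b ∈ J ∧
    x = MonoidAlgebra.single a 1 - MonoidAlgebra.single b 1}

theorem lift_single_one (m : M) :
    (MonoidAlgebra.lift ℤ A M α).toRingHom (MonoidAlgebra.single m 1) = α m := by
  simp [MonoidAlgebra.lift_single]

theorem map_differenceIdeal_le :
    (differenceIdeal α J).map (MonoidAlgebra.lift ℤ A M α).toRingHom
      ≤ Ideal.span (Set.range α ∩ (J : Set A)) := by
  rw [Ideal.map_le_iff_le_comap, differenceIdeal, Ideal.span_le]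
  rintro x ⟨a, b, ha, hb, rfl⟩
  rw [SetLike.mem_coe, Ideal.mem_comap, map_sub, lift_single_one, lift_single_one]
  exact sub_mem (Ideal.subset_span ⟨⟨a, rfl⟩, ha⟩) (Ideal.subset_span ⟨⟨b, rfl⟩, hb⟩)

theorem span_le_map_differenceIdeal [IsLocalRing A] (hJ : J ≠ ⊤) :
    Ideal.span (Set.range α ∩ (J : Set A))
      ≤ (differenceIdeal α J).map (MonoidAlgebra.lift ℤ A M α).toRingHom := by
  rw [Ideal.span_le]
  rintro _ ⟨⟨m, rfl⟩, hm⟩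
  have hmm : α (m * m) ∈ J := by
    rw [map_mul]
    exact J.mul_mem_left _ hm
  have hdiff : α m - α m * α m ∈
      (differenceIdeal α J).map (MonoidAlgebra.lift ℤ A M α).toRingHom := by
    rw [← map_mul, ← lift_single_one α m, ← lift_single_one α (m * m), ← map_sub]
    exact Ideal.mem_map_of_mem _ (Ideal.subset_span ⟨m, m * m, hm, hmm, rfl⟩)
  have hmax : α m ∈ IsLocalRing.maximalIdeal A := IsLocalRing.le_maximalIdeal hJ hm
  exact (Ideal.span_singleton_le_iff_mem _).mpr hdiff
    (IsLocalRing.mem_span_singleton_sub_mul_self hmax)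

end DifferenceIdeal

theorem stmt_12_general {M : Type*} [CommMonoid M]
    {A : Type*} [CommRing A] [IsLocalRing A]
    (α : M →* A)
    (J : Ideal A) (hJ : J ≠ ⊤) :
    Ideal.map ((MonoidAlgebra.lift ℤ A M α : MonoidAlgebra ℤ M →ₐ[ℤ] A).toRingHom)
        (Ideal.span {x : MonoidAlgebra ℤ M | ∃ a b : M, α a ∈ J ∧ α b ∈ J ∧
          x = MonoidAlgebra.single a 1 - MonoidAlgebra.single b 1})
      = Ideal.span (Set.range α ∩ (J : Set A)) :=
  le_antisymm (map_differenceIdeal_le α J) (span_le_map_differenceIdeal α J hJ)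

/-- For a noetherian local prelog ring `(A, M, α)` with `M` finitely
generated and `α` local, a proper ideal `J ⊆ A`, the ideal `𝔞` of `ℤ[M]` generated by
the differences `a − b` with `a, b ∈ α⁻¹(J)`, and the ideal `I ⊆ A` generated by
`α(M) ∩ J`, one has `𝔞·A = I`. -/
theorem stmt_12 {M : Type*} [CommMonoid M] [Monoid.FG M]
    {A : Type*} [CommRing A] [IsLocalRing A] [IsNoetherianRing A]
    (α : M →* A)
    (hloc : ∀ m : M, ¬ IsUnit m → α m ∈ IsLocalRing.maximalIdeal A)
    (J : Ideal A) (hJ : J ≠ ⊤) :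
    Ideal.map ((MonoidAlgebra.lift ℤ A M α : MonoidAlgebra ℤ M →ₐ[ℤ] A).toRingHom)
        (Ideal.span {x : MonoidAlgebra ℤ M | ∃ a b : M, α a ∈ J ∧ α b ∈ J ∧
          x = MonoidAlgebra.single a 1 - MonoidAlgebra.single b 1})
      = Ideal.span (Set.range α ∩ (J : Set A)) :=
  stmt_12_general α J hJ
end
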